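/- Let ζ ≥ 0 and 0 < x < 1 + ζ/2, and suppose ξ ∈ (0, π/2) satisfies (sin(2ξ)/(2ξ)) · (1 + (ζ/2) · tan(ξ)/ξ) = x. Then I_BS(x; ζ) = 2(ξ² + ζ²/4) · (tan(ξ)/(ξ + (ζ/2) tan(ξ)) − 1) − 2ζ log(cos ξ + (ζ/2) · sin(ξ)/ξ) + ζ². -/

import Mathlib

open MeasureTheory Real Filter
open scoped ENNReal

/-- The rate function `I_BS(x; ζ)`: the infimum, over measurable `g : [0,1] → ℝ`
with `∫₀¹ g(t)² dt < ∞` and `∫₀¹ exp(∫₀ᵗ g(s) ds) dt = x`, of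
`(1/2) ∫₀¹ (g(t) − ζ)² dt`, with the infimum over the empty set equal to `+∞`. -/
noncomputable def IBS (ζ x : ℝ) : ℝ≥0∞ :=
  sInf {y : ℝ≥0∞ | ∃ g : ℝ → ℝ, Measurable g ∧
    IntegrableOn (fun t => (g t) ^ 2) (Set.Icc 0 1) ∧
    (∫ t in (0:ℝ)..1, Real.exp (∫ s in (0:ℝ)..t, g s)) = x ∧
    y = ENNReal.ofReal ((1 / 2) * ∫ t in (0:ℝ)..1, (g t - ζ) ^ 2)}

/-! ### Auxiliary definitions and lemmas -/

noncomputable def clamp01 (t : ℝ) : ℝ := max 0 (min t 1)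

lemma clamp01_mem (t : ℝ) : clamp01 t ∈ Set.Icc (0:ℝ) 1 :=
  ⟨le_max_left _ _, max_le (by norm_num) (min_le_right t 1)⟩

lemma clamp01_eq {t : ℝ} (h : t ∈ Set.Icc (0:ℝ) 1) : clamp01 t = t := by
  simp only [clamp01, min_eq_left h.2, max_eq_right h.1]

lemma continuous_clamp01 : Continuous clamp01 :=
  continuous_const.max (continuous_id.min continuous_const)

noncomputable def gopt (ζ ξ t : ℝ) : ℝ :=
  2 * ξ * Real.tan (ξ * clamp01 t - (ξ - Real.arctan (ζ / (2 * ξ))))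

noncomputable def vopt (ζ ξ s : ℝ) : ℝ :=
  Real.cos (ξ - Real.arctan (ζ / (2 * ξ))) ^ 2
    / Real.cos (ξ * clamp01 s - (ξ - Real.arctan (ζ / (2 * ξ)))) ^ 2

lemma cos_pos_arg {ζ ξ : ℝ} (hζ : 0 ≤ ζ) (h0 : 0 < ξ) (h2 : ξ < π / 2) {u : ℝ}
    (hu : u ∈ Set.Icc (Real.arctan (ζ/(2*ξ)) - ξ) (Real.arctan (ζ/(2*ξ)))) :
    0 < Real.cos u := by
  have hβ0 : 0 ≤ Real.arctan (ζ/(2*ξ)) := by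
    rw [← Real.arctan_zero]; exact Real.arctan_strictMono.monotone (by positivity)
  have hβ2 : Real.arctan (ζ/(2*ξ)) < π/2 := Real.arctan_lt_pi_div_two _
  exact Real.cos_pos_of_mem_Ioo ⟨by linarith [hu.1], by linarith [hu.2]⟩

lemma arg_mem {ζ ξ : ℝ} (h0 : 0 < ξ) {t : ℝ} (ht : t ∈ Set.Icc (0:ℝ) 1) :
    ξ * t - (ξ - Real.arctan (ζ/(2*ξ))) ∈
      Set.Icc (Real.arctan (ζ/(2*ξ)) - ξ) (Real.arctan (ζ/(2*ξ))) :=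
  ⟨by nlinarith [ht.1], by nlinarith [ht.2]⟩

lemma continuous_gopt {ζ ξ : ℝ} (hζ : 0 ≤ ζ) (h0 : 0 < ξ) (h2 : ξ < π / 2) :
    Continuous (gopt ζ ξ) := by
  rw [continuous_iff_continuousAt]
  intro t
  apply ContinuousAt.mul continuousAt_const
  have h1 : ContinuousAt (fun t => ξ * clamp01 t - (ξ - Real.arctan (ζ / (2 * ξ)))) t :=
    ((continuous_const.mul continuous_clamp01).sub continuous_const).continuousAt
  have h2' : ContinuousAt Real.tan (ξ * clamp01 t - (ξ - Real.arctan (ζ / (2 * ξ)))) :=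
    (Real.continuousAt_tan).2 (ne_of_gt (cos_pos_arg hζ h0 h2 (arg_mem h0 (clamp01_mem t))))
  exact (ContinuousAt.comp (g := Real.tan) h2' h1)

lemma gopt_integral {ζ ξ : ℝ} (hζ : 0 ≤ ζ) (h0 : 0 < ξ) (h2 : ξ < π / 2) {t : ℝ}
    (ht : t ∈ Set.Icc (0:ℝ) 1) :
    ∫ s in (0:ℝ)..t, gopt ζ ξ s
      = 2 * (Real.log (Real.cos (ξ - Real.arctan (ζ/(2*ξ))))
          - Real.log (Real.cos (ξ * t - (ξ - Real.arctan (ζ/(2*ξ)))))) := by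
  set b := ξ - Real.arctan (ζ/(2*ξ)) with hb
  have key : ∀ s ∈ Set.uIcc (0:ℝ) t,
      HasDerivAt (fun u => 2 * (Real.log (Real.cos b) - Real.log (Real.cos (ξ * u - b))))
        (gopt ζ ξ s) s := by
    intro s hs
    rw [Set.uIcc_of_le ht.1] at hs
    have hs01 : s ∈ Set.Icc (0:ℝ) 1 := ⟨hs.1, le_trans hs.2 ht.2⟩
    have hcos : 0 < Real.cos (ξ * s - b) := cos_pos_arg hζ h0 h2 (arg_mem h0 hs01)
    have hd1 : HasDerivAt (fun u : ℝ => ξ * u - b) ξ s := by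
      simpa using ((hasDerivAt_id s).const_mul ξ).sub_const b
    have hd2 : HasDerivAt (fun u => Real.cos (ξ * u - b)) (-Real.sin (ξ * s - b) * ξ) s :=
      (Real.hasDerivAt_cos _).comp s hd1
    have hd3 : HasDerivAt (fun u => Real.log (Real.cos (ξ * u - b)))
        ((-Real.sin (ξ * s - b) * ξ) / Real.cos (ξ * s - b)) s :=
      hd2.log (ne_of_gt hcos)
    have hd4 := (hd3.const_sub (Real.log (Real.cos b))).const_mul (2:ℝ)
    refine hd4.congr_deriv ?_
    symm
    unfold gopt
    rw [clamp01_eq hs01, Real.tan_eq_sin_div_cos, ← hb]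
    field_simp
  rw [intervalIntegral.integral_eq_sub_of_hasDerivAt key
    ((continuous_gopt hζ h0 h2).intervalIntegrable 0 t)]
  simp [Real.cos_neg]

lemma continuous_vopt {ζ ξ : ℝ} (hζ : 0 ≤ ζ) (h0 : 0 < ξ) (h2 : ξ < π / 2) :
    Continuous (vopt ζ ξ) := by
  apply continuous_const.div
  · exact (Real.continuous_cos.comp
      ((continuous_const.mul continuous_clamp01).sub continuous_const)).pow 2
  · intro t
    exact ne_of_gt (pow_pos (cos_pos_arg hζ h0 h2 (arg_mem h0 (clamp01_mem t))) 2)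

lemma hcb_pos {ζ ξ : ℝ} (hζ : 0 ≤ ζ) (h0 : 0 < ξ) (h2 : ξ < π / 2) :
    0 < Real.cos (ξ - Real.arctan (ζ/(2*ξ))) := by
  have h' := cos_pos_arg hζ h0 h2 (arg_mem h0 (Set.mem_Icc.2 ⟨le_refl (0:ℝ), by norm_num⟩))
  rw [show ξ*(0:ℝ) - (ξ - Real.arctan (ζ/(2*ξ))) = -(ξ - Real.arctan (ζ/(2*ξ))) by ring,
    Real.cos_neg] at h'
  exact h'

lemma vopt_pos {ζ ξ : ℝ} (hζ : 0 ≤ ζ) (h0 : 0 < ξ) (h2 : ξ < π / 2) (s : ℝ) :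
    0 < vopt ζ ξ s :=
  div_pos (pow_pos (hcb_pos hζ h0 h2) 2)
    (pow_pos (cos_pos_arg hζ h0 h2 (arg_mem h0 (clamp01_mem s))) 2)

lemma exp_gopt_integral {ζ ξ : ℝ} (hζ : 0 ≤ ζ) (h0 : 0 < ξ) (h2 : ξ < π / 2) {t : ℝ}
    (ht : t ∈ Set.Icc (0:ℝ) 1) :
    Real.exp (∫ s in (0:ℝ)..t, gopt ζ ξ s) = vopt ζ ξ t := by
  set b := ξ - Real.arctan (ζ/(2*ξ)) with hb
  have hcb : 0 < Real.cos b := hcb_pos hζ h0 h2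
  have hcu : 0 < Real.cos (ξ * t - b) := cos_pos_arg hζ h0 h2 (arg_mem h0 ht)
  rw [gopt_integral hζ h0 h2 ht, ← hb]
  have : (2:ℝ) * (Real.log (Real.cos b) - Real.log (Real.cos (ξ * t - b)))
      = (Real.log (Real.cos b) - Real.log (Real.cos (ξ * t - b)))
        + (Real.log (Real.cos b) - Real.log (Real.cos (ξ * t - b))) := by ring
  rw [this, Real.exp_add, Real.exp_sub, Real.exp_log hcb, Real.exp_log hcu]
  unfold vopt
  rw [clamp01_eq ht, ← hb]
  field_simp

lemma vopt_integral {ζ ξ : ℝ} (hζ : 0 ≤ ζ) (h0 : 0 < ξ) (h2 : ξ < π / 2) {t : ℝ}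
    (ht : t ∈ Set.Icc (0:ℝ) 1) :
    ∫ s in t..(1:ℝ), vopt ζ ξ s
      = Real.cos (ξ - Real.arctan (ζ/(2*ξ))) ^ 2
        * (Real.tan (Real.arctan (ζ/(2*ξ)))
            - Real.tan (ξ * t - (ξ - Real.arctan (ζ/(2*ξ))))) / ξ := by
  set b := ξ - Real.arctan (ζ/(2*ξ)) with hb
  have key : ∀ s ∈ Set.uIcc t (1:ℝ),
      HasDerivAt (fun u => Real.cos b ^ 2 * Real.tan (ξ * u - b) / ξ)
        (vopt ζ ξ s) s := by
    intro s hs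
    rw [Set.uIcc_of_le ht.2] at hs
    have hs01 : s ∈ Set.Icc (0:ℝ) 1 := ⟨le_trans ht.1 hs.1, hs.2⟩
    have hcos : 0 < Real.cos (ξ * s - b) := cos_pos_arg hζ h0 h2 (arg_mem h0 hs01)
    have hd1 : HasDerivAt (fun u : ℝ => ξ * u - b) ξ s := by
      simpa using ((hasDerivAt_id s).const_mul ξ).sub_const b
    have hd2 : HasDerivAt (fun u => Real.tan (ξ * u - b))
        (1 / Real.cos (ξ * s - b) ^ 2 * ξ) s :=
      by have := Real.hasDerivAt_tan (ne_of_gt hcos); exact this.comp s hd1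
    have hd4 := (hd2.const_mul (Real.cos b ^ 2)).div_const ξ
    refine hd4.congr_deriv ?_
    symm
    unfold vopt
    rw [clamp01_eq hs01, ← hb]
    field_simp
  rw [intervalIntegral.integral_eq_sub_of_hasDerivAt key
    ((continuous_vopt hζ h0 h2).intervalIntegrable t 1)]
  have h1 : ξ * 1 - b = Real.arctan (ζ/(2*ξ)) := by rw [hb]; ring
  rw [h1]
  ring

lemma gopt_value_integral {ζ ξ : ℝ} (hζ : 0 ≤ ζ) (h0 : 0 < ξ) (h2 : ξ < π / 2) :
    ∫ t in (0:ℝ)..1, (gopt ζ ξ t - ζ) ^ 2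
      = 4*ξ*(Real.tan (Real.arctan (ζ/(2*ξ))) + Real.tan (ξ - Real.arctan (ζ/(2*ξ))))
        - 4*ξ^2
        + 4*ζ*(Real.log (Real.cos (Real.arctan (ζ/(2*ξ))))
            - Real.log (Real.cos (ξ - Real.arctan (ζ/(2*ξ)))))
        + ζ^2 := by
  set b := ξ - Real.arctan (ζ/(2*ξ)) with hb
  have key : ∀ s ∈ Set.uIcc (0:ℝ) 1,
      HasDerivAt (fun u => 4*ξ*Real.tan (ξ*u - b) - 4*ξ^2*u
          + 4*ζ*Real.log (Real.cos (ξ*u - b)) + ζ^2*u)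
        ((gopt ζ ξ s - ζ)^2) s := by
    intro s hs
    rw [Set.uIcc_of_le (by norm_num : (0:ℝ) ≤ 1)] at hs
    have hcos : 0 < Real.cos (ξ * s - b) := cos_pos_arg hζ h0 h2 (arg_mem h0 hs)
    have hd1 : HasDerivAt (fun u : ℝ => ξ * u - b) ξ s := by
      simpa using ((hasDerivAt_id s).const_mul ξ).sub_const b
    have hd2 : HasDerivAt (fun u => Real.tan (ξ * u - b))
        (1 / Real.cos (ξ * s - b) ^ 2 * ξ) s :=
      by have := Real.hasDerivAt_tan (ne_of_gt hcos); exact this.comp s hd1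
    have hd3 : HasDerivAt (fun u => Real.cos (ξ * u - b)) (-Real.sin (ξ * s - b) * ξ) s :=
      (Real.hasDerivAt_cos _).comp s hd1
    have hd4 : HasDerivAt (fun u => Real.log (Real.cos (ξ * u - b)))
        ((-Real.sin (ξ * s - b) * ξ) / Real.cos (ξ * s - b)) s :=
      hd3.log (ne_of_gt hcos)
    have hd5 := (((hd2.const_mul (4*ξ)).sub ((hasDerivAt_id s).const_mul (4*ξ^2))).add
        (hd4.const_mul (4*ζ))).add ((hasDerivAt_id s).const_mul (ζ^2))
    refine hd5.congr_deriv ?_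
    symm
    unfold gopt
    rw [clamp01_eq hs, ← hb, Real.tan_eq_sin_div_cos]
    have hpy : Real.sin (ξ*s-b)^2 = 1 - Real.cos (ξ*s-b)^2 := by
      have := Real.sin_sq_add_cos_sq (ξ*s-b); linarith
    set u := ξ * s - b with hu
    field_simp
    linear_combination (4*ξ^2) * hpy
  have hcont : Continuous (fun t => (gopt ζ ξ t - ζ)^2) :=
    ((continuous_gopt hζ h0 h2).sub continuous_const).pow 2
  rw [intervalIntegral.integral_eq_sub_of_hasDerivAt key (hcont.intervalIntegrable 0 1)]
  have h1 : ξ * 1 - b = Real.arctan (ζ/(2*ξ)) := by rw [hb]; ring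
  have h0' : ξ * 0 - b = -b := by ring
  rw [h1, h0']
  simp [Real.cos_neg, Real.tan_neg]
  ring

lemma fubini_triangle (v h : ℝ → ℝ) (hv : Continuous v) (hm : Measurable h)
    (hint : IntegrableOn h (Set.Icc 0 1)) :
    ∫ t in Set.Ioc (0:ℝ) 1, (∫ s in Set.Ioc t 1, v s) * h t
      = ∫ s in Set.Ioc (0:ℝ) 1, v s * ∫ t in Set.Ioc 0 s, h t := by
  set μ := volume.restrict (Set.Ioc (0:ℝ) 1) with hμ
  set F : ℝ → ℝ → ℝ := fun t s => if t < s then v s * h t else 0 with hF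
  have hh : Integrable h μ := hint.mono_set Set.Ioc_subset_Icc_self
  have hvi : Integrable v μ := (hv.integrableOn_Icc).mono_set Set.Ioc_subset_Icc_self
  have base : Integrable (fun z : ℝ × ℝ => h z.1 * v z.2) (μ.prod μ) :=
    Integrable.mul_prod hh hvi
  have huncurry : Function.uncurry F =
      Set.indicator {z : ℝ × ℝ | z.1 < z.2} (fun z => h z.1 * v z.2) := by
    funext z
    simp only [Function.uncurry, hF, Set.indicator_apply, Set.mem_setOf_eq]
    rw [mul_comm]
  have hFi : Integrable (Function.uncurry F) (μ.prod μ) := by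
    rw [huncurry]
    exact base.indicator (measurableSet_lt measurable_fst measurable_snd)
  have swap := MeasureTheory.integral_integral_swap (f := F) hFi
  have hL : ∫ t, (∫ s, F t s ∂μ) ∂μ
      = ∫ t in Set.Ioc (0:ℝ) 1, (∫ s in Set.Ioc t 1, v s) * h t := by
    rw [hμ]
    apply MeasureTheory.setIntegral_congr_fun measurableSet_Ioc
    intro t ht
    have h1 : ∀ s : ℝ, F t s = Set.indicator (Set.Ioi t) (fun s => v s * h t) s := by
      intro s
      simp only [hF, Set.indicator_apply, Set.mem_Ioi]
    simp only [h1]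
    rw [MeasureTheory.setIntegral_indicator measurableSet_Ioi]
    have h2 : Set.Ioc (0:ℝ) 1 ∩ Set.Ioi t = Set.Ioc t 1 := by
      ext u
      simp only [Set.mem_inter_iff, Set.mem_Ioc, Set.mem_Ioi]
      constructor
      · rintro ⟨⟨_, hu1⟩, hut⟩; exact ⟨hut, hu1⟩
      · rintro ⟨hut, hu1⟩; exact ⟨⟨lt_trans ht.1 hut, hu1⟩, hut⟩
    rw [h2, MeasureTheory.integral_mul_const]
  have hR : ∫ s, (∫ t, F t s ∂μ) ∂μ
      = ∫ s in Set.Ioc (0:ℝ) 1, v s * ∫ t in Set.Ioc 0 s, h t := by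
    rw [hμ]
    apply MeasureTheory.setIntegral_congr_fun measurableSet_Ioc
    intro s hs
    have h1 : ∀ t : ℝ, F t s = Set.indicator (Set.Iio s) (fun t => v s * h t) t := by
      intro t
      simp only [hF, Set.indicator_apply, Set.mem_Iio]
    simp only [h1]
    rw [MeasureTheory.setIntegral_indicator measurableSet_Iio]
    have h2 : Set.Ioc (0:ℝ) 1 ∩ Set.Iio s = Set.Ioo 0 s := by
      ext u
      simp only [Set.mem_inter_iff, Set.mem_Ioc, Set.mem_Iio, Set.mem_Ioo]
      constructor
      · rintro ⟨⟨hu0, _⟩, hus⟩; exact ⟨hu0, hus⟩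
      · rintro ⟨hu0, hus⟩; exact ⟨⟨hu0, le_trans (le_of_lt hus) hs.2⟩, hus⟩
    rw [h2, MeasureTheory.integral_const_mul, ← MeasureTheory.integral_Ioc_eq_integral_Ioo]
  rw [← hL, ← hR, swap]

lemma lemA {ζ ξ : ℝ} (hζ : 0 ≤ ζ) (h0 : 0 < ξ) (h2 : ξ < π/2) {x : ℝ}
    (heq : Real.sin (2 * ξ) / (2 * ξ) * (1 + (ζ / 2) * Real.tan ξ / ξ) = x) :
    Real.cos (ξ - Real.arctan (ζ/(2*ξ))) ^ 2 *
      (Real.tan (Real.arctan (ζ/(2*ξ))) + Real.tan (ξ - Real.arctan (ζ/(2*ξ)))) / ξ = x := by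
  set β := Real.arctan (ζ/(2*ξ)) with hβdef
  have hβ0 : 0 ≤ β := by
    rw [hβdef, ← Real.arctan_zero]; exact Real.arctan_strictMono.monotone (by positivity)
  have hβ2 : β < π/2 := Real.arctan_lt_pi_div_two _
  have hcβ : 0 < Real.cos β := Real.cos_pos_of_mem_Ioo ⟨by linarith [Real.pi_div_two_pos], hβ2⟩
  have hcξ : 0 < Real.cos ξ := Real.cos_pos_of_mem_Ioo ⟨by linarith [Real.pi_div_two_pos], h2⟩
  have hcb : 0 < Real.cos (ξ - β) := Real.cos_pos_of_mem_Ioo ⟨by linarith, by linarith⟩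
  have htβ : Real.tan β = ζ/(2*ξ) := Real.tan_arctan _
  have hsβ : Real.sin β = ζ/(2*ξ) * Real.cos β := by
    rw [← htβ, Real.tan_eq_sin_div_cos]; field_simp
  have key0 : Real.sin β * Real.cos (ξ-β) + Real.cos β * Real.sin (ξ-β) = Real.sin ξ := by
    rw [← Real.sin_add]; ring_nf
  have key : Real.tan β + Real.tan (ξ - β) = Real.sin ξ / (Real.cos β * Real.cos (ξ-β)) := by
    rw [Real.tan_eq_sin_div_cos, Real.tan_eq_sin_div_cos,
      div_add_div _ _ (ne_of_gt hcβ) (ne_of_gt hcb), ← key0]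
  rw [key]
  have lhs_eq : Real.cos (ξ-β)^2 * (Real.sin ξ/(Real.cos β * Real.cos (ξ-β)))/ξ
      = Real.cos (ξ-β) * Real.sin ξ/(Real.cos β * ξ) := by
    field_simp
  rw [lhs_eq, ← heq, Real.sin_two_mul, Real.tan_eq_sin_div_cos, Real.cos_sub, hsβ]
  field_simp

lemma lemB {ζ ξ : ℝ} (hζ : 0 ≤ ζ) (h0 : 0 < ξ) (h2 : ξ < π/2) :
    2 * (ξ ^ 2 + ζ ^ 2 / 4) * (Real.tan ξ / (ξ + (ζ / 2) * Real.tan ξ) - 1)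
        - 2 * ζ * Real.log (Real.cos ξ + (ζ / 2) * Real.sin ξ / ξ) + ζ ^ 2
      = 2*ξ*(Real.tan (Real.arctan (ζ/(2*ξ))) + Real.tan (ξ - Real.arctan (ζ/(2*ξ)))) - 2*ξ^2
        + 2*ζ*(Real.log (Real.cos (Real.arctan (ζ/(2*ξ))))
            - Real.log (Real.cos (ξ - Real.arctan (ζ/(2*ξ)))))
        + ζ^2/2 := by
  set β := Real.arctan (ζ/(2*ξ)) with hβdef
  have hβ0 : 0 ≤ β := by
    rw [hβdef, ← Real.arctan_zero]; exact Real.arctan_strictMono.monotone (by positivity)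
  have hβ2 : β < π/2 := Real.arctan_lt_pi_div_two _
  have hcβ : 0 < Real.cos β := Real.cos_pos_of_mem_Ioo ⟨by linarith [Real.pi_div_two_pos], hβ2⟩
  have hcξ : 0 < Real.cos ξ := Real.cos_pos_of_mem_Ioo ⟨by linarith [Real.pi_div_two_pos], h2⟩
  have hcb : 0 < Real.cos (ξ - β) := Real.cos_pos_of_mem_Ioo ⟨by linarith, by linarith⟩
  have htβ : Real.tan β = ζ/(2*ξ) := Real.tan_arctan _
  have hsβ : Real.sin β = ζ/(2*ξ) * Real.cos β := by
    rw [← htβ, Real.tan_eq_sin_div_cos]; field_simp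
  have key0 : Real.sin β * Real.cos (ξ-β) + Real.cos β * Real.sin (ξ-β) = Real.sin ξ := by
    rw [← Real.sin_add]; ring_nf
  have key : Real.tan β + Real.tan (ξ - β) = Real.sin ξ / (Real.cos β * Real.cos (ξ-β)) := by
    rw [Real.tan_eq_sin_div_cos, Real.tan_eq_sin_div_cos,
      div_add_div _ _ (ne_of_gt hcβ) (ne_of_gt hcb), ← key0]
  have hpyβ : Real.sin β ^2 + Real.cos β ^2 = 1 := Real.sin_sq_add_cos_sq β
  have hlogarg : Real.cos ξ + (ζ/2) * Real.sin ξ / ξ = Real.cos (ξ - β) / Real.cos β := by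
    rw [Real.cos_sub, hsβ]; field_simp
  have hlog : Real.log (Real.cos ξ + (ζ/2) * Real.sin ξ / ξ)
      = Real.log (Real.cos (ξ - β)) - Real.log (Real.cos β) := by
    rw [hlogarg, Real.log_div (ne_of_gt hcb) (ne_of_gt hcβ)]
  have hden : ξ + (ζ/2) * Real.tan ξ = ξ * Real.cos (ξ-β) / (Real.cos β * Real.cos ξ) := by
    rw [Real.tan_eq_sin_div_cos, Real.cos_sub, hsβ]; field_simp
  have hmain : 2 * (ξ ^ 2 + ζ ^ 2 / 4) * (Real.tan ξ / (ξ + (ζ / 2) * Real.tan ξ))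
      = 2*ξ*(Real.tan β + Real.tan (ξ - β)) := by
    rw [key, hden, Real.tan_eq_sin_div_cos]
    have hζ2 : ξ ^ 2 + ζ^2/4 = ξ^2 / Real.cos β ^2 := by
      rw [hsβ] at hpyβ; field_simp at hpyβ ⊢; nlinarith [hpyβ]
    rw [hζ2]
    field_simp
  rw [hlog, ← hmain]
  ring

/-- Case ii) of the explicit rate function: for `0 < x < 1 + ζ/2` and
`ξ ∈ (0, π/2)` solving `(sin(2ξ)/(2ξ))(1 + (ζ/2) tan(ξ)/ξ) = x`, one has the
stated closed form for `I_BS(x; ζ)`. -/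
theorem IBS_formula_case_ii (ζ x ξ : ℝ) (hζ : 0 ≤ ζ) (hx0 : 0 < x)
    (hx : x < 1 + ζ / 2) (hξ : ξ ∈ Set.Ioo 0 (π / 2))
    (heq : Real.sin (2 * ξ) / (2 * ξ) * (1 + (ζ / 2) * Real.tan ξ / ξ) = x) :
    IBS ζ x = ENNReal.ofReal
      (2 * (ξ ^ 2 + ζ ^ 2 / 4) *
          (Real.tan ξ / (ξ + (ζ / 2) * Real.tan ξ) - 1)
        - 2 * ζ * Real.log (Real.cos ξ + (ζ / 2) * Real.sin ξ / ξ)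
        + ζ ^ 2) := by
  obtain ⟨h0, h2⟩ := hξ
  have hIcc : Set.uIcc (0:ℝ) 1 = Set.Icc 0 1 := Set.uIcc_of_le (by norm_num)
  have hξne : ξ ≠ 0 := ne_of_gt h0
  have hcb : 0 < Real.cos (ξ - Real.arctan (ζ/(2*ξ))) := hcb_pos hζ h0 h2
  -- value of the constraint integral for the optimizer
  have hvx : ∫ s in (0:ℝ)..1, vopt ζ ξ s = x := by
    have h00 : (0:ℝ) ∈ Set.Icc (0:ℝ) 1 := Set.mem_Icc.2 ⟨le_refl _, by norm_num⟩
    rw [vopt_integral hζ h0 h2 h00,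
      show ξ*(0:ℝ) - (ξ - Real.arctan (ζ/(2*ξ))) = -(ξ - Real.arctan (ζ/(2*ξ))) by ring,
      Real.tan_neg]
    have := lemA hζ h0 h2 heq
    rw [← this]
    ring
  -- the optimizer satisfies the constraint
  have hxint : ∫ t in (0:ℝ)..1, Real.exp (∫ s in (0:ℝ)..t, gopt ζ ξ s) = x := by
    rw [intervalIntegral.integral_congr (g := vopt ζ ξ) ?_]
    · exact hvx
    · intro t ht
      rw [hIcc] at ht
      exact exp_gopt_integral hζ h0 h2 ht
  -- the value of the optimizer
  have hval : (1/2 : ℝ) * ∫ t in (0:ℝ)..1, (gopt ζ ξ t - ζ)^2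
      = 2 * (ξ ^ 2 + ζ ^ 2 / 4) * (Real.tan ξ / (ξ + (ζ / 2) * Real.tan ξ) - 1)
        - 2 * ζ * Real.log (Real.cos ξ + (ζ / 2) * Real.sin ξ / ξ) + ζ ^ 2 := by
    rw [gopt_value_integral hζ h0 h2, lemB hζ h0 h2]
    ring
  apply le_antisymm
  · -- upper bound: the optimizer is admissible
    apply sInf_le
    refine ⟨gopt ζ ξ, (continuous_gopt hζ h0 h2).measurable,
      (((continuous_gopt hζ h0 h2).pow 2).integrableOn_Icc), hxint, ?_⟩
    rw [hval]
  · -- lower bound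
    apply le_sInf
    rintro y ⟨g, hgm, hg2, hgx, rfl⟩
    apply ENNReal.ofReal_le_ofReal
    -- integrability of g
    have hg1 : IntegrableOn g (Set.Icc 0 1) := by
      have hmaj : IntegrableOn (fun t => 1 + g t^2) (Set.Icc (0:ℝ) 1) := by
        apply Integrable.add _ hg2
        exact integrableOn_const measure_Icc_lt_top.ne
      apply hmaj.mono' (hgm.aestronglyMeasurable.restrict)
      filter_upwards with t
      rw [Real.norm_eq_abs]
      nlinarith [abs_nonneg (g t), sq_abs (g t), sq_nonneg (|g t| - 1)]
    have hgoptc : Continuous (gopt ζ ξ) := continuous_gopt hζ h0 h2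
    have hgopt1 : IntegrableOn (gopt ζ ξ) (Set.Icc 0 1) := hgoptc.integrableOn_Icc
    set G : ℝ → ℝ := fun t => g t - gopt ζ ξ t with hGdef
    have hG : IntegrableOn G (Set.Icc 0 1) := hg1.sub hgopt1
    have hGm : Measurable G := hgm.sub hgoptc.measurable
    have hcross : IntegrableOn (fun t => (gopt ζ ξ t - ζ) * G t) (Set.Icc 0 1) :=
      IntegrableOn.continuousOn_mul ((hgoptc.sub continuous_const).continuousOn) hG isCompact_Icc
    have hgz2 : IntegrableOn (fun t => (g t - ζ)^2) (Set.Icc 0 1) := by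
      have heq2 : (fun t => (g t - ζ)^2) = fun t => (g t^2 - (2*ζ)*g t) + ζ^2 :=
        funext fun t => by ring
      rw [heq2]
      apply Integrable.add (hg2.sub (hg1.const_mul (2*ζ)))
      exact integrableOn_const measure_Icc_lt_top.ne
    -- monotonicity step
    have hmono : ∫ t in (0:ℝ)..1, ((gopt ζ ξ t - ζ)^2 + 2*((gopt ζ ξ t - ζ) * G t))
        ≤ ∫ t in (0:ℝ)..1, (g t - ζ)^2 := by
      apply intervalIntegral.integral_mono_on (by norm_num)
      · apply IntervalIntegrable.add
        · exact (((hgoptc.sub continuous_const).pow 2)).intervalIntegrable 0 1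
        · rw [intervalIntegrable_iff_integrableOn_Ioc_of_le (by norm_num)]
          exact IntegrableOn.mono_set (hcross.const_mul 2) Set.Ioc_subset_Icc_self
      · rw [intervalIntegrable_iff_integrableOn_Ioc_of_le (by norm_num)]
        exact hgz2.mono_set Set.Ioc_subset_Icc_self
      · intro t ht
        have : (g t - ζ)^2 = (gopt ζ ξ t - ζ)^2 + 2*((gopt ζ ξ t - ζ) * G t) + G t^2 := by
          rw [hGdef]; ring
        nlinarith [sq_nonneg (G t)]
    have hsplit : ∫ t in (0:ℝ)..1, ((gopt ζ ξ t - ζ)^2 + 2*((gopt ζ ξ t - ζ) * G t))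
        = (∫ t in (0:ℝ)..1, (gopt ζ ξ t - ζ)^2)
          + 2 * ∫ t in (0:ℝ)..1, (gopt ζ ξ t - ζ) * G t := by
      rw [intervalIntegral.integral_add, intervalIntegral.integral_const_mul]
      · exact (((hgoptc.sub continuous_const).pow 2)).intervalIntegrable 0 1
      · rw [intervalIntegrable_iff_integrableOn_Ioc_of_le (by norm_num)]
        exact IntegrableOn.mono_set (hcross.const_mul 2) Set.Ioc_subset_Icc_self
    -- the cross term is nonnegative
    set μ₀ : ℝ := 2*ξ^2 / Real.cos (ξ - Real.arctan (ζ/(2*ξ)))^2 with hμ₀def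
    have hμ₀pos : 0 < μ₀ := by positivity
    have hwid : ∀ t ∈ Set.Ioc (0:ℝ) 1,
        gopt ζ ξ t - ζ = -μ₀ * ∫ s in Set.Ioc t 1, vopt ζ ξ s := by
      intro t ht
      have ht' : t ∈ Set.Icc (0:ℝ) 1 := ⟨le_of_lt ht.1, ht.2⟩
      rw [show (∫ s in Set.Ioc t 1, vopt ζ ξ s) = ∫ s in t..(1:ℝ), vopt ζ ξ s by
        rw [intervalIntegral.integral_of_le ht.2]]
      rw [vopt_integral hζ h0 h2 ht', Real.tan_arctan]
      unfold gopt
      rw [clamp01_eq ht', hμ₀def]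
      field_simp
      ring
    have hcross0 : 0 ≤ ∫ t in (0:ℝ)..1, (gopt ζ ξ t - ζ) * G t := by
      rw [intervalIntegral.integral_of_le (by norm_num : (0:ℝ) ≤ 1)]
      have congr1 : ∫ t in Set.Ioc (0:ℝ) 1, (gopt ζ ξ t - ζ) * G t
          = ∫ t in Set.Ioc (0:ℝ) 1, (-μ₀) * ((∫ s in Set.Ioc t 1, vopt ζ ξ s) * G t) := by
        apply MeasureTheory.setIntegral_congr_fun measurableSet_Ioc
        intro t ht
        dsimp only
        rw [hwid t ht]; ring
      rw [congr1, MeasureTheory.integral_const_mul,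
        fubini_triangle (vopt ζ ξ) G (continuous_vopt hζ h0 h2) hGm hG]
      -- show the double integral is ≤ 0
      have hexpint : IntegrableOn (fun s => Real.exp (∫ u in (0:ℝ)..s, g u))
          (Set.Icc (0:ℝ) 1) := by
        apply ContinuousOn.integrableOn_compact isCompact_Icc
        apply Real.continuous_exp.comp_continuousOn
        have := intervalIntegral.continuousOn_primitive_interval
          (f := g) (μ := volume) (a := 0) (b := 1) (by rw [hIcc]; exact hg1)
        rw [hIcc] at this
        exact this
      have hA : ∫ s in Set.Ioc (0:ℝ) 1, vopt ζ ξ s * ∫ t in Set.Ioc 0 s, G t ≤ 0 := by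
        have hkey : ∀ s ∈ Set.Ioc (0:ℝ) 1, vopt ζ ξ s * (∫ t in Set.Ioc 0 s, G t)
            ≤ Real.exp (∫ u in (0:ℝ)..s, g u) - vopt ζ ξ s := by
          intro s hs
          have hs' : s ∈ Set.Icc (0:ℝ) 1 := ⟨le_of_lt hs.1, hs.2⟩
          have hint1 : IntervalIntegrable g volume 0 s := by
            rw [intervalIntegrable_iff_integrableOn_Ioc_of_le hs'.1]
            exact (hg1.mono_set (Set.Ioc_subset_Icc_self.trans
              (Set.Icc_subset_Icc le_rfl hs'.2)))
          have hint2 : IntervalIntegrable (gopt ζ ξ) volume 0 s :=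
            hgoptc.intervalIntegrable 0 s
          have hHG : ∫ t in Set.Ioc 0 s, G t
              = (∫ u in (0:ℝ)..s, g u) - ∫ u in (0:ℝ)..s, gopt ζ ξ u := by
            rw [← intervalIntegral.integral_of_le hs'.1, hGdef,
              intervalIntegral.integral_sub hint1 hint2]
          rw [hHG, ← exp_gopt_integral hζ h0 h2 hs']
          set p := ∫ u in (0:ℝ)..s, g u
          set q := ∫ u in (0:ℝ)..s, gopt ζ ξ u
          have h1 : (p - q) + 1 ≤ Real.exp (p - q) := Real.add_one_le_exp _
          have h2' : Real.exp q * Real.exp (p - q) = Real.exp p := by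
            rw [← Real.exp_add]; ring_nf
          nlinarith [Real.exp_pos q]
        have hint1 : IntegrableOn (fun s => vopt ζ ξ s * ∫ t in Set.Ioc 0 s, G t)
            (Set.Ioc (0:ℝ) 1) := by
          apply IntegrableOn.mono_set _ Set.Ioc_subset_Icc_self
          apply ContinuousOn.integrableOn_compact isCompact_Icc
          exact (continuous_vopt hζ h0 h2).continuousOn.mul
            (intervalIntegral.continuousOn_primitive hG)
        have hint2 : IntegrableOn
            (fun s => Real.exp (∫ u in (0:ℝ)..s, g u) - vopt ζ ξ s) (Set.Ioc (0:ℝ) 1) := by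
          apply IntegrableOn.mono_set _ Set.Ioc_subset_Icc_self
          apply ContinuousOn.integrableOn_compact isCompact_Icc
          apply ContinuousOn.sub
          · apply Real.continuous_exp.comp_continuousOn
            have := intervalIntegral.continuousOn_primitive_interval
              (f := g) (μ := volume) (a := 0) (b := 1) (by rw [hIcc]; exact hg1)
            rw [hIcc] at this
            exact this
          · exact (continuous_vopt hζ h0 h2).continuousOn
        calc ∫ s in Set.Ioc (0:ℝ) 1, vopt ζ ξ s * ∫ t in Set.Ioc 0 s, G t
            ≤ ∫ s in Set.Ioc (0:ℝ) 1,
                (Real.exp (∫ u in (0:ℝ)..s, g u) - vopt ζ ξ s) :=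
              MeasureTheory.setIntegral_mono_on hint1 hint2 measurableSet_Ioc hkey
          _ = (∫ s in Set.Ioc (0:ℝ) 1, Real.exp (∫ u in (0:ℝ)..s, g u))
                - ∫ s in Set.Ioc (0:ℝ) 1, vopt ζ ξ s := by
              apply MeasureTheory.integral_sub
              · exact hexpint.mono_set Set.Ioc_subset_Icc_self
              · exact (continuous_vopt hζ h0 h2).integrableOn_Icc.mono_set
                  Set.Ioc_subset_Icc_self
          _ = x - x := by
              rw [← intervalIntegral.integral_of_le (by norm_num : (0:ℝ) ≤ 1), hgx,
                ← intervalIntegral.integral_of_le (by norm_num : (0:ℝ) ≤ 1), hvx]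
          _ = 0 := by ring
      nlinarith [hA, hμ₀pos]
    -- combine
    have hfinal := hval
    linarith [hmono, hsplit, hcross0, hval]
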